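/- Let X be countable with a distinguished state ℓ ∈ X, q(y|x,a) ≥ 0 transition rates, c bounded costs, and μ : X → [1, K*] a function satisfying μ(x) ≥ 1 + Σ_{y ≠ ℓ} q(y|x,a)μ(y) for all x ∈ X, a ∈ A(x). Fix β̄ ∈ [(K*−1)/K*, 1) and define on X̄ = X ∪ {x̄}: c̄(x,a) = c(x,a)/μ(x), p̄(y|x,a) = q(y|x,a)μ(y)/(β̄μ(x)) for y ∈ X∖{ℓ}, p̄(ℓ|x,a) = [μ(x) − 1 − Σ_{y≠ℓ} q(y|x,a)μ(y)]/(β̄μ(x)), and p̄(x̄|x,a) = 1 − (μ(x)−1)/(β̄μ(x)). Then for any bounded f : X̄ → ℝ with f(x̄) = 0, and for any x ∈ X, a ∈ A(x): c̄(x,a) + β̄ Σ_{y∈X̄} p̄(y|x,a) f(y) = (1/μ(x)) [ c(x,a) + Σ_{y∈X} q(y|x,a)μ(y)(f(y) − f(ℓ)) + (μ(x)−1) f(ℓ) ]. -/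

import Mathlib

/-!
For `β ≠ 0` the factor `β` cancels against the `1 / β` in every transition probability, the
term at `x̄` vanishes because `f x̄ = 0`, and the identity is a rearrangement of absolutely
convergent sums: the mass `μ x - 1 - ∑_{y ≠ ℓ} q μ` put on `ℓ` is exactly what turns
`∑_{y ≠ ℓ} q μ f` into `∑_y q μ (f y - f ℓ) + (μ x - 1) f ℓ`. The bound `β ≥ (K - 1) / K`
allows `β = 0` only when `K = 1`; then `μ ≡ 1`, the drift condition forces `q(y|x,a) = 0` for
`y ≠ ℓ`, and both sides reduce to `c(x,a)`.
-/

theorem tsum_option_eq_tsum_some {M : Type*} [AddCommMonoid M] [TopologicalSpace M]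
    {X : Type*} {g : Option X → M} (hg : g none = 0) :
    ∑' y, g y = ∑' y : X, g (some y) := by
  refine ((Option.some_injective X).tsum_eq fun y hy => ?_).symm
  cases y with
  | none => exact absurd hg hy
  | some y => exact ⟨y, rfl⟩

theorem summable_mul_of_bounded {X : Type*} {w g : X → ℝ} {C : ℝ} (hw : Summable w)
    (hw0 : ∀ y, 0 ≤ w y) (hg : ∀ y, |g y| ≤ C) : Summable fun y => w y * g y :=
  (hw.mul_right C).of_norm_bounded fun y => by
    rw [Real.norm_eq_abs, abs_mul, abs_of_nonneg (hw0 y)]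
    exact mul_le_mul_of_nonneg_left (hg y) (hw0 y)

section OffPoint

variable {X : Type*} [DecidableEq X] (ℓ : X)

noncomputable def tsumOff (w : X → ℝ) : ℝ := ∑' y, if y = ℓ then 0 else w y

theorem summable_ite_eq {w : X → ℝ} (hw : Summable w) (v : ℝ) :
    Summable fun y => if y = ℓ then v else w y :=
  (hw.update ℓ v).congr (Function.update_apply w ℓ v)

theorem tsum_ite_eq_add_tsumOff {w : X → ℝ} (hw : Summable w) (v : ℝ) :
    ∑' y, (if y = ℓ then v else w y) = v + tsumOff ℓ w := by
  rw [(summable_ite_eq ℓ hw v).tsum_eq_add_tsum_ite ℓ, if_pos rfl, tsumOff]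
  congr 1
  refine tsum_congr fun y => ?_
  by_cases h : y = ℓ <;> simp [h]

theorem tsum_mul_sub_eq {w g : X → ℝ} (hw : Summable w) (hwg : Summable fun y => w y * g y) :
    ∑' y, w y * (g y - g ℓ) = tsumOff ℓ (fun y => w y * g y) - tsumOff ℓ w * g ℓ := by
  have hs : Summable fun y => w y * (g y - g ℓ) := by
    simpa only [mul_sub] using hwg.sub (hw.mul_right (g ℓ))
  rw [hs.tsum_eq_add_tsum_ite ℓ, sub_self, mul_zero, zero_add, tsumOff, tsumOff,
    ← tsum_mul_right, ← (summable_ite_eq ℓ hwg 0).tsum_sub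
      ((summable_ite_eq ℓ hw 0).mul_right _)]
  refine tsum_congr fun y => ?_
  by_cases h : y = ℓ <;> simp [h, mul_sub]

theorem tsum_mul_sub_eq_zero_of_tsumOff_nonpos {w : X → ℝ} (g : X → ℝ) (hw : Summable w)
    (hw0 : ∀ y, 0 ≤ w y) (hS : tsumOff ℓ w ≤ 0) : ∑' y, w y * (g y - g ℓ) = 0 := by
  have hoff : ∀ y, y ≠ ℓ → w y = 0 := fun y hy => by
    have hle := (summable_ite_eq ℓ hw 0).le_tsum y fun z _ => by
      by_cases h : z = ℓ <;> simp [h, hw0 z]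
    rw [if_neg hy] at hle
    exact le_antisymm (hle.trans hS) (hw0 y)
  refine (tsum_congr fun y => ?_).trans tsum_zero
  by_cases h : y = ℓ
  · simp [h]
  · simp [hoff y h]

/-- `p` is `p̄(·|x,a)` on `X̄ = Option X`, with `w y = q(y|x,a) μ(y)` and `m = μ(x)`. -/
theorem mul_tsum_mul_eq {w : X → ℝ} {p F : Option X → ℝ} {m β : ℝ} (hβ : β ≠ 0) (hm : m ≠ 0)
    (hp : ∀ y, p (some y)
      = if y = ℓ then (m - 1 - tsumOff ℓ w) / (β * m) else w y / (β * m))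
    (hwF : Summable fun y => w y * F (some y)) (hF : F none = 0) :
    β * ∑' y, p y * F y
      = ((m - 1 - tsumOff ℓ w) * F (some ℓ) + tsumOff ℓ fun y => w y * F (some y)) / m := by
  have hterm : ∀ y, p (some y) * F (some y)
      = (if y = ℓ then (m - 1 - tsumOff ℓ w) * F (some ℓ) else w y * F (some y)) / (β * m) := by
    intro y
    by_cases h : y = ℓ <;> simp [hp, h, div_mul_eq_mul_div]
  rw [tsum_option_eq_tsum_some (by simp [hF]), tsum_congr hterm, tsum_div_const,
    tsum_ite_eq_add_tsumOff ℓ hwF]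
  field_simp

end OffPoint

theorem stmt6 {X A : Type*} [DecidableEq X] (ℓ : X)
    (q : X → A → X → ℝ) (hq0 : ∀ x a y, 0 ≤ q x a y) (hqs : ∀ x a, Summable (q x a))
    (c : X → A → ℝ)
    (K : ℝ) (hK : 1 ≤ K)
    (μ : X → ℝ) (hμ1 : ∀ x, 1 ≤ μ x) (hμK : ∀ x, μ x ≤ K)
    (hμ : ∀ x a, 1 + ∑' y, (if y = ℓ then 0 else q x a y * μ y) ≤ μ x)
    (β : ℝ) (hβl : (K - 1) / K ≤ β)
    (f : Option X → ℝ) (Cf : ℝ) (hf : ∀ y, |f y| ≤ Cf) (hf0 : f none = 0) :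
    ∀ (x : X) (a : A),
      letI pb : Option X → ℝ := fun y =>
        match y with
        | some y =>
            if y = ℓ then
              (μ x - 1 - ∑' z, (if z = ℓ then 0 else q x a z * μ z)) / (β * μ x)
            else q x a y * μ y / (β * μ x)
        | none => 1 - (μ x - 1) / (β * μ x)
      c x a / μ x + β * ∑' y : Option X, pb y * f y
        = (1 / μ x) *
            (c x a + (∑' y : X, q x a y * μ y * (f (some y) - f (some ℓ)))
              + (μ x - 1) * f (some ℓ)) := by
  intro x a
  set w : X → ℝ := fun y => q x a y * μ y
  have hw0 : ∀ y, 0 ≤ w y := fun y => mul_nonneg (hq0 x a y) (zero_le_one.trans (hμ1 y))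
  have hw : Summable w := summable_mul_of_bounded (hqs x a) (hq0 x a) fun y =>
    (abs_of_nonneg (zero_le_one.trans (hμ1 y))).trans_le (hμK y)
  have hwf : Summable fun y => w y * f (some y) := summable_mul_of_bounded hw hw0 fun y => hf _
  rcases eq_or_ne β 0 with hβ | hβ
  · have hK1 : K ≤ 1 := by
      have := (div_le_iff₀ (zero_lt_one.trans_le hK)).1 (hβ ▸ hβl)
      linarith
    have hμx : μ x = 1 := le_antisymm ((hμK x).trans hK1) (hμ1 x)
    have hS : 1 + tsumOff ℓ w ≤ μ x := hμ x a
    have hsum := tsum_mul_sub_eq_zero_of_tsumOff_nonpos ℓ (fun y => f (some y)) hw hw0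
      (by linarith)
    rw [show ∑' y, q x a y * μ y * (f (some y) - f (some ℓ)) = 0 from hsum, hβ, hμx]
    ring
  · rw [mul_tsum_mul_eq ℓ hβ (zero_lt_one.trans_le (hμ1 x)).ne' (fun y => rfl) hwf hf0,
      tsum_mul_sub_eq ℓ hw hwf]
    field_simp
    ring
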